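/- arXiv:2202.13423 — 2 statements merged into one kernel-verified Lean document; each statement's English description precedes it below -/
import Mathlib

section
/- Let (X,d) be a separable metric space, p ≥ 1, and μ ∈ P_p(X). Let Y_1, Y_2, … be i.i.d. with law μ and ν̄_n the empirical measures. Let {R_n}, R be random closed subsets of X and {k_n}, k random positive integers. Then almost surely on the event {k_n ≠ k only finitely often} ∩ {Lt_n R_n = R}, every subsequential Hausdorff-metric limit of cluster-center sets S_n ∈ C_p(ν̄_n, k_n, R_n) belongs to C_p(μ, k, R); equivalently, ⋂_n closure(⋃_{m ≥ n} C_p(ν̄_m, k_m, R_m)) ⊆ C_p(μ, k, R). -/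
open Filter MeasureTheory Topology TopologicalSpace Metric Set

noncomputable section

/-- Kuratowski lower limit of a sequence of sets. -/
def KurLi {Y : Type*} [TopologicalSpace Y] (A : ℕ → Set Y) : Set Y :=
  {x | ∀ U ∈ nhds x, ∀ᶠ n in atTop, (U ∩ A n).Nonempty}

/-- Kuratowski upper limit of a sequence of sets. -/
def KurLs {Y : Type*} [TopologicalSpace Y] (A : ℕ → Set Y) : Set Y :=
  {x | ∀ U ∈ nhds x, ∃ᶠ n in atTop, (U ∩ A n).Nonempty}

variable {X : Type*} [MetricSpace X] [MeasurableSpace X]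

/-- The clustering cost `W_p(S,μ) = ∫ d(y,S)^p dμ(y)`. -/
def Wp (p : ℝ) (S : Set X) (μ : Measure X) : ℝ :=
  ∫ y, infDist y S ^ p ∂μ

/-- `μ` has a finite `p`-th moment. -/
def FinMom (p : ℝ) (μ : Measure X) : Prop :=
  ∃ x : X, Integrable (fun y => dist x y ^ p) μ

/-- Convergence in the `p`-Wasserstein topology: weak convergence together with
convergence of the `p`-th moments about some point. -/
def WassTendsto (p : ℝ) (μ : ℕ → Measure X) (ν : Measure X) : Prop :=
  (∀ f : BoundedContinuousFunction X ℝ,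
      Tendsto (fun n => ∫ y, f y ∂ μ n) atTop (𝓝 (∫ y, f y ∂ ν))) ∧
  ∃ x : X, Tendsto (fun n => ∫ y, dist x y ^ p ∂ μ n) atTop (𝓝 (∫ y, dist x y ^ p ∂ ν))

/-- `S` is a feasible set of cluster centers: a nonempty finite subset of `R`
with at most `k` points. -/
def Feas (k : ℕ) (R S : Set X) : Prop :=
  S ⊆ R ∧ S.Finite ∧ S.Nonempty ∧ S.ncard ≤ k

/-- The optimal clustering cost `m_{k,p}(μ,R)`. -/
def mCost (p : ℝ) (μ : Measure X) (k : ℕ) (R : Set X) : ℝ :=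
  sInf ((fun S => Wp p S μ) '' {S | Feas k R S})

/-- The set of optimal cluster-center sets `C_p(μ,k,R)`, viewed as a subset of the
hyperspace of nonempty compact subsets of `X` with the Hausdorff metric. -/
def Cp (p : ℝ) (μ : Measure X) (k : ℕ) (R : Set X) : Set (NonemptyCompacts X) :=
  {S | Feas k R (S : Set X) ∧ ∀ T : Set X, Feas k R T → Wp p (S : Set X) μ ≤ Wp p T μ}

/-- The support of a measure on a metric space. -/
def measSupp (μ : Measure X) : Set X :=
  {x | ∀ r : ℝ, 0 < r → μ (Metric.ball x r) ≠ 0}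

/-- The empirical measure `ν̄_n = (1/n) Σ_{i<n} δ_{Y_i(ω)}` of the first `n` samples. -/
def empMeas {X : Type*} [MeasurableSpace X] {Ω : Type*} (Y : ℕ → Ω → X) (ω : Ω) (n : ℕ) :
    Measure X :=
  ((n : ENNReal))⁻¹ • ∑ i ∈ Finset.range n, Measure.dirac (Y i ω)


section AuxLemmas

open Metric Filter MeasureTheory

variable {X : Type*} [MetricSpace X]

lemma aux_le_infDist {T : Set X} (hT : T.Nonempty) {x : X} {c : ℝ}
    (h : ∀ y ∈ T, c ≤ dist x y) : c ≤ infDist x T := by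
  by_contra hlt
  push_neg at hlt
  obtain ⟨y, hy, hd⟩ := (infDist_lt_iff hT).1 hlt
  exact absurd (h y hy) (not_le.2 hd)

lemma aux_cont_rpow {p : ℝ} (hp : 1 ≤ p) : Continuous fun x : ℝ => x ^ p :=
  continuous_iff_continuousAt.2 fun x =>
    Real.continuousAt_rpow_const x p (Or.inr (le_trans zero_le_one hp))

lemma aux_add_rpow_le {p : ℝ} (hp : 0 ≤ p) {a b : ℝ} (ha : 0 ≤ a) (hb : 0 ≤ b) :
    (a + b) ^ p ≤ 2 ^ p * (a ^ p + b ^ p) := by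
  have h1 : a + b ≤ 2 * max a b := by
    rcases le_total a b with h | h
    · rw [max_eq_right h]; linarith
    · rw [max_eq_left h]; linarith
  have h2 : (a + b) ^ p ≤ (2 * max a b) ^ p :=
    Real.rpow_le_rpow (by positivity) h1 hp
  have h3 : (2 * max a b) ^ p = 2 ^ p * (max a b) ^ p :=
    Real.mul_rpow (by norm_num) (le_max_of_le_left ha)
  have h4 : (max a b) ^ p ≤ a ^ p + b ^ p := by
    rcases max_cases a b with ⟨h, _⟩ | ⟨h, _⟩ <;> rw [h]
    · have := Real.rpow_nonneg hb p; linarith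
    · have := Real.rpow_nonneg ha p; linarith
  have h5 : (0:ℝ) ≤ 2 ^ p := Real.rpow_nonneg (by norm_num) p
  calc (a + b) ^ p ≤ 2 ^ p * (max a b) ^ p := by rw [← h3]; exact h2
    _ ≤ 2 ^ p * (a ^ p + b ^ p) := by nlinarith

lemma aux_infDist_within {S T : Set X} (hT : T.Nonempty) {δ : ℝ}
    (h : ∀ t ∈ T, ∃ s ∈ S, dist s t ≤ δ) (y : X) :
    infDist y S ≤ infDist y T + δ := by
  rw [← sub_le_iff_le_add]
  apply aux_le_infDist hT
  intro t ht
  obtain ⟨s, hs, hst⟩ := h t ht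
  have h1 : infDist y S ≤ dist y s := infDist_le_dist_of_mem hs
  have h2 : dist y s ≤ dist y t + dist t s := dist_triangle y t s
  have h3 : dist t s ≤ δ := by rw [dist_comm]; exact hst
  linarith

lemma aux_dense_approx (d : ℕ → X) (hd : DenseRange d) {S : Set X}
    (hSf : S.Finite) (hSn : S.Nonempty) {δ : ℝ} (hδ : 0 < δ) :
    ∃ F : Finset ℕ, F.Nonempty ∧
      (∀ y, infDist y (d '' ↑F) ≤ infDist y S + δ) ∧
      (∀ y, infDist y S ≤ infDist y (d '' ↑F) + δ) := by
  classical
  have hch : ∀ s : X, ∃ i : ℕ, dist (d i) s ≤ δ := by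
    intro s
    obtain ⟨i, hi⟩ := Metric.denseRange_iff.1 hd s δ hδ
    exact ⟨i, by rw [dist_comm]; exact hi.le⟩
  choose f hf using hch
  refine ⟨hSf.toFinset.image f, ?_, ?_, ?_⟩
  · exact ((hSf.toFinset_nonempty).2 hSn).image f
  · intro y
    apply aux_infDist_within hSn _ y
    intro s hs
    have hmem : f s ∈ hSf.toFinset.image f :=
      Finset.mem_image_of_mem f (hSf.mem_toFinset.2 hs)
    exact ⟨d (f s), Set.mem_image_of_mem d (Finset.mem_coe.2 hmem), hf s⟩
  · intro y
    have hne : (d '' ↑(hSf.toFinset.image f)).Nonempty := by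
      apply Set.Nonempty.image d
      exact Finset.coe_nonempty.2 (((hSf.toFinset_nonempty).2 hSn).image f)
    apply aux_infDist_within hne _ y
    rintro t ⟨i, hi, rfl⟩
    rw [Finset.mem_coe, Finset.mem_image] at hi
    obtain ⟨sf, hsf, rfl⟩ := hi
    exact ⟨sf, hSf.mem_toFinset.1 hsf, by rw [dist_comm]; exact hf sf⟩

lemma aux_card_limit {S : Set X} {k₀ : ℕ} (hk₀ : 1 ≤ k₀)
    (happ : ∀ ε : ℝ, 0 < ε → ∃ T : Set X, T.Finite ∧ T.ncard ≤ k₀ ∧ T.Nonempty ∧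
      ∀ x ∈ S, ∃ t ∈ T, dist x t < ε) :
    S.Finite ∧ S.ncard ≤ k₀ := by
  by_contra hcon
  have hV : ∃ V ⊆ S, V.Finite ∧ V.ncard = k₀ + 1 := by
    by_cases hSf : S.Finite
    · have h1 : ¬ S.ncard ≤ k₀ := fun h => hcon ⟨hSf, h⟩
      obtain ⟨V, hVS, hVc⟩ := Set.exists_subset_card_eq (by omega : k₀ + 1 ≤ S.ncard)
      exact ⟨V, hVS, hSf.subset hVS, hVc⟩
    · have hSi : S.Infinite := hSf
      exact hSi.exists_subset_ncard_eq (k₀ + 1)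
  obtain ⟨V, hVS, hVf, hVc⟩ := hV
  classical
  set Fv := hVf.toFinset with hFv
  have hFvcard : Fv.card = k₀ + 1 := by
    rw [← hVc, Set.ncard_eq_toFinset_card _ hVf]
  have hcard2 : 1 < Fv.card := by omega
  obtain ⟨a, ha, b, hb, hab⟩ := Finset.one_lt_card.1 hcard2
  have hod : Fv.offDiag.Nonempty := ⟨(a, b), Finset.mem_offDiag.2 ⟨ha, hb, hab⟩⟩
  set img := Fv.offDiag.image (fun q => dist q.1 q.2) with himgdef
  have himg : img.Nonempty := hod.image _
  set m := img.min' himg with hmdef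
  have hm : 0 < m := by
    obtain ⟨q, hq, hqe⟩ := Finset.mem_image.1 (img.min'_mem himg)
    rw [hmdef, ← hqe]
    exact dist_pos.2 (Finset.mem_offDiag.1 hq).2.2
  obtain ⟨T, hTf, hTc, hTne, hTapp⟩ := happ (m/3) (by positivity)
  have hchoice : ∀ x : X, ∃ t : X, x ∈ V → (t ∈ T ∧ dist x t < m/3) := by
    intro x
    by_cases hx : x ∈ V
    · obtain ⟨t, ht, htd⟩ := hTapp x (hVS hx)
      exact ⟨t, fun _ => ⟨ht, htd⟩⟩
    · exact ⟨hTne.some, fun h => absurd h hx⟩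
  choose g hg using hchoice
  have hinj : Set.InjOn g V := by
    intro x hx y hy hxy
    by_contra hne
    have hxF : x ∈ Fv := hVf.mem_toFinset.2 hx
    have hyF : y ∈ Fv := hVf.mem_toFinset.2 hy
    have hmem : dist x y ∈ img :=
      Finset.mem_image.2 ⟨(x, y), Finset.mem_offDiag.2 ⟨hxF, hyF, hne⟩, rfl⟩
    have hmle : m ≤ dist x y := Finset.min'_le _ _ hmem
    have h1 := (hg x hx).2
    have h2 := (hg y hy).2
    have h3 : dist x y ≤ dist x (g x) + dist (g y) y := by
      rw [hxy]
      have := dist_triangle x (g y) y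
      rw [dist_comm (g y) y] at this ⊢
      linarith [dist_triangle x (g y) y]
    rw [dist_comm (g y) y] at h3
    linarith
  have hle : (g '' V).ncard ≤ T.ncard := by
    apply Set.ncard_le_ncard _ hTf
    rintro _ ⟨x, hx, rfl⟩
    exact (hg x hx).1
  rw [Set.ncard_image_of_injOn hinj, hVc] at hle
  omega

end AuxLemmas


section KeyLemmas

open Metric Filter MeasureTheory Topology

variable {X : Type*} [MetricSpace X] [MeasurableSpace X] [OpensMeasurableSpace X]

lemma aux_integrable_growth {p : ℝ} (hp : 1 ≤ p) (μ : Measure X) [IsFiniteMeasure μ]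
    {x₀ : X} (hmom : Integrable (fun y => dist x₀ y ^ p) μ)
    {g : X → ℝ} (hg : Continuous g) (h0 : ∀ y, 0 ≤ g y) {C : ℝ} (hC : 0 ≤ C)
    (hle : ∀ y, g y ≤ dist x₀ y + C) :
    Integrable (fun y => g y ^ p) μ := by
  have hp0 : (0:ℝ) ≤ p := le_trans zero_le_one hp
  have hdom : Integrable (fun y => 2 ^ p * (dist x₀ y ^ p + C ^ p)) μ :=
    (hmom.add (integrable_const _)).const_mul _
  refine hdom.mono ?_ (Filter.Eventually.of_forall fun y => ?_)
  · exact ((aux_cont_rpow hp).comp hg).aestronglyMeasurable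
  · have h1 : g y ^ p ≤ (dist x₀ y + C) ^ p :=
      Real.rpow_le_rpow (h0 y) (hle y) hp0
    have h2 : (dist x₀ y + C) ^ p ≤ 2 ^ p * (dist x₀ y ^ p + C ^ p) :=
      aux_add_rpow_le hp0 dist_nonneg hC
    have h3 : (0:ℝ) ≤ g y ^ p := Real.rpow_nonneg (h0 y) p
    have h4 : (0:ℝ) ≤ 2 ^ p * (dist x₀ y ^ p + C ^ p) := by
      have := Real.rpow_nonneg (dist_nonneg : (0:ℝ) ≤ dist x₀ y) p
      have := Real.rpow_nonneg hC p
      have := Real.rpow_nonneg (by norm_num : (0:ℝ) ≤ 2) p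
      nlinarith
    rw [Real.norm_of_nonneg h3, Real.norm_of_nonneg h4]
    linarith

lemma aux_integrable_plus {p : ℝ} (hp : 1 ≤ p) (μ : Measure X) [IsFiniteMeasure μ]
    {x₀ : X} (hmom : Integrable (fun y => dist x₀ y ^ p) μ)
    {A : Set X} (hA : A.Nonempty) {c : ℝ} (hc : 0 ≤ c) :
    Integrable (fun y => (infDist y A + c) ^ p) μ := by
  obtain ⟨a, ha⟩ := hA
  refine aux_integrable_growth hp μ hmom
    ((continuous_infDist_pt A).add continuous_const) (fun y => add_nonneg infDist_nonneg hc)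
    (by positivity : (0:ℝ) ≤ dist x₀ a + c) (fun y => ?_)
  have h1 : infDist y A ≤ dist y a := infDist_le_dist_of_mem ha
  have h2 : dist y a ≤ dist y x₀ + dist x₀ a := dist_triangle y x₀ a
  rw [dist_comm y x₀] at h2
  linarith

lemma aux_integrable_minus {p : ℝ} (hp : 1 ≤ p) (μ : Measure X) [IsFiniteMeasure μ]
    {x₀ : X} (hmom : Integrable (fun y => dist x₀ y ^ p) μ)
    {A : Set X} (hA : A.Nonempty) {c : ℝ} (hc : 0 ≤ c) :
    Integrable (fun y => ((infDist y A - c) ⊔ 0) ^ p) μ := by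
  obtain ⟨a, ha⟩ := hA
  refine aux_integrable_growth hp μ hmom
    (((continuous_infDist_pt A).sub continuous_const).max continuous_const)
    (fun y => le_max_right _ _)
    (by positivity : (0:ℝ) ≤ dist x₀ a) (fun y => ?_)
  have h1 : infDist y A ≤ dist y a := infDist_le_dist_of_mem ha
  have h2 : dist y a ≤ dist y x₀ + dist x₀ a := dist_triangle y x₀ a
  rw [dist_comm y x₀] at h2
  have h3 : (0:ℝ) ≤ infDist y A := infDist_nonneg
  rcases max_cases (infDist y A - c) (0:ℝ) with ⟨h, _⟩ | ⟨h, _⟩ <;> rw [h] <;> [linarith; positivity]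

lemma keyUp {p : ℝ} (hp : 1 ≤ p) (μ : Measure X) [IsFiniteMeasure μ]
    {x₀ : X} (hmom : Integrable (fun y => dist x₀ y ^ p) μ)
    (ν : ℕ → Measure X) (hint : ∀ m (f : X → ℝ), Continuous f → Integrable f (ν m))
    (d : ℕ → X) (hd : DenseRange d)
    (H : ∀ F : Finset ℕ, F.Nonempty → ∀ q : ℚ, 0 ≤ q →
      Tendsto (fun m => ∫ y, (infDist y (d '' ↑F) + (q:ℝ)) ^ p ∂ν m) atTop
        (𝓝 (∫ y, (infDist y (d '' ↑F) + (q:ℝ)) ^ p ∂μ)))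
    {S : Set X} (hSf : S.Finite) (hSn : S.Nonempty) {δ : ℝ} (hδ : 0 < δ) :
    ∀ᶠ m in atTop, ∀ A : Set X, A.Nonempty → (∀ y, infDist y A ≤ infDist y S + δ) →
      ∫ y, infDist y A ^ p ∂ν m ≤ (∫ y, (infDist y S + 3*δ) ^ p ∂μ) + δ := by
  have hp0 : (0:ℝ) ≤ p := le_trans zero_le_one hp
  obtain ⟨F, hFne, hF1, hF2⟩ := aux_dense_approx d hd hSf hSn (half_pos hδ)
  obtain ⟨q, hq1, hq2⟩ := exists_rat_btwn (show (3/2)*δ < 2*δ by linarith)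
  have hq0 : (0:ℚ) ≤ q := by
    have : (0:ℝ) < (q:ℝ) := lt_of_le_of_lt (by positivity) hq1
    exact_mod_cast this.le
  have hdF : (d '' ↑F).Nonempty := Set.Nonempty.image d (Finset.coe_nonempty.2 hFne)
  have htend := H F hFne q hq0
  have hev := htend.eventually_le_const
    (lt_add_of_pos_right (∫ y, (infDist y (d '' ↑F) + (q:ℝ)) ^ p ∂μ) hδ)
  filter_upwards [hev] with m hm A hA hAS
  have int1 : Integrable (fun y => infDist y A ^ p) (ν m) :=
    hint m _ ((aux_cont_rpow hp).comp (continuous_infDist_pt A))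
  have int2 : Integrable (fun y => (infDist y (d '' ↑F) + (q:ℝ)) ^ p) (ν m) :=
    hint m _ ((aux_cont_rpow hp).comp ((continuous_infDist_pt _).add continuous_const))
  have step1 : ∫ y, infDist y A ^ p ∂ν m ≤ ∫ y, (infDist y (d '' ↑F) + (q:ℝ)) ^ p ∂ν m := by
    refine integral_mono int1 int2 fun y => ?_
    refine Real.rpow_le_rpow infDist_nonneg ?_ hp0
    have := hAS y
    have := hF2 y
    linarith
  have step3 : ∫ y, (infDist y (d '' ↑F) + (q:ℝ)) ^ p ∂μ ≤ ∫ y, (infDist y S + 3*δ) ^ p ∂μ := by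
    refine integral_mono (aux_integrable_plus hp μ hmom hdF (by exact_mod_cast hq0 : (0:ℝ) ≤ (q:ℝ))) ?_ fun y => ?_
    · exact aux_integrable_plus hp μ hmom hSn (by linarith : (0:ℝ) ≤ 3*δ)
    · refine Real.rpow_le_rpow
        (add_nonneg infDist_nonneg (by exact_mod_cast hq0 : (0:ℝ) ≤ (q:ℝ))) ?_ hp0
      have := hF1 y
      linarith
  linarith

lemma keyDown {p : ℝ} (hp : 1 ≤ p) (μ : Measure X) [IsFiniteMeasure μ]
    {x₀ : X} (hmom : Integrable (fun y => dist x₀ y ^ p) μ)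
    (ν : ℕ → Measure X) (hint : ∀ m (f : X → ℝ), Continuous f → Integrable f (ν m))
    (d : ℕ → X) (hd : DenseRange d)
    (H : ∀ F : Finset ℕ, F.Nonempty → ∀ q : ℚ, 0 ≤ q →
      Tendsto (fun m => ∫ y, ((infDist y (d '' ↑F) - (q:ℝ)) ⊔ 0) ^ p ∂ν m) atTop
        (𝓝 (∫ y, ((infDist y (d '' ↑F) - (q:ℝ)) ⊔ 0) ^ p ∂μ)))
    {S : Set X} (hSf : S.Finite) (hSn : S.Nonempty) {δ : ℝ} (hδ : 0 < δ) :
    ∀ᶠ m in atTop, ∀ A : Set X, A.Nonempty → (∀ y, infDist y S ≤ infDist y A + δ) →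
      (∫ y, ((infDist y S - 3*δ) ⊔ 0) ^ p ∂μ) - δ ≤ ∫ y, infDist y A ^ p ∂ν m := by
  have hp0 : (0:ℝ) ≤ p := le_trans zero_le_one hp
  obtain ⟨F, hFne, hF1, hF2⟩ := aux_dense_approx d hd hSf hSn (half_pos hδ)
  obtain ⟨q, hq1, hq2⟩ := exists_rat_btwn (show (3/2)*δ < 2*δ by linarith)
  have hq0 : (0:ℚ) ≤ q := by
    have : (0:ℝ) < (q:ℝ) := lt_of_le_of_lt (by positivity) hq1
    exact_mod_cast this.le
  have hdF : (d '' ↑F).Nonempty := Set.Nonempty.image d (Finset.coe_nonempty.2 hFne)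
  have htend := H F hFne q hq0
  have hev := htend.eventually_const_le
    (sub_lt_self (∫ y, ((infDist y (d '' ↑F) - (q:ℝ)) ⊔ 0) ^ p ∂μ) hδ)
  filter_upwards [hev] with m hm A hA hAS
  have int1 : Integrable (fun y => infDist y A ^ p) (ν m) :=
    hint m _ ((aux_cont_rpow hp).comp (continuous_infDist_pt A))
  have int2 : Integrable (fun y => ((infDist y (d '' ↑F) - (q:ℝ)) ⊔ 0) ^ p) (ν m) :=
    hint m _ ((aux_cont_rpow hp).comp
      (((continuous_infDist_pt _).sub continuous_const).max continuous_const))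
  have step1 : ∫ y, ((infDist y (d '' ↑F) - (q:ℝ)) ⊔ 0) ^ p ∂ν m ≤ ∫ y, infDist y A ^ p ∂ν m := by
    refine integral_mono int2 int1 fun y => ?_
    refine Real.rpow_le_rpow (le_max_right _ _) ?_ hp0
    have h1 := hF1 y
    have h2 := hAS y
    have h3 : (0:ℝ) ≤ infDist y A := infDist_nonneg
    rcases max_cases (infDist y (d '' ↑F) - (q:ℝ)) (0:ℝ) with ⟨h, _⟩ | ⟨h, _⟩ <;> rw [h] <;> linarith
  have step3 : ∫ y, ((infDist y S - 3*δ) ⊔ 0) ^ p ∂μ ≤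
      ∫ y, ((infDist y (d '' ↑F) - (q:ℝ)) ⊔ 0) ^ p ∂μ := by
    refine integral_mono (aux_integrable_minus hp μ hmom hSn (by linarith : (0:ℝ) ≤ 3*δ))
      (aux_integrable_minus hp μ hmom hdF (by exact_mod_cast hq0 : (0:ℝ) ≤ (q:ℝ))) fun y => ?_
    refine Real.rpow_le_rpow (le_max_right _ _) ?_ hp0
    have h1 := hF2 y
    rcases max_cases (infDist y S - 3*δ) (0:ℝ) with ⟨h, _⟩ | ⟨h, _⟩ <;> rw [h]
    · rcases max_cases (infDist y (d '' ↑F) - (q:ℝ)) (0:ℝ) with ⟨h', _⟩ | ⟨h', _⟩ <;> rw [h'] <;> linarith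
    · exact le_max_right _ _
  linarith

lemma keyLimit {p : ℝ} (hp : 1 ≤ p) (μ : Measure X) [IsFiniteMeasure μ]
    {x₀ : X} (hmom : Integrable (fun y => dist x₀ y ^ p) μ)
    {S : Set X} (hSn : S.Nonempty) {ε : ℝ} (hε : 0 < ε) :
    ∃ δ : ℝ, 0 < δ ∧ (∫ y, (infDist y S + 3*δ) ^ p ∂μ ≤ Wp p S μ + ε) ∧
      (Wp p S μ - ε ≤ ∫ y, ((infDist y S - 3*δ) ⊔ 0) ^ p ∂μ) := by
  have hp0 : (0:ℝ) ≤ p := le_trans zero_le_one hp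
  set L : ℝ := Wp p S μ with hL
  have hbound : Integrable (fun y => (infDist y S + 3) ^ p) μ :=
    aux_integrable_plus hp μ hmom hSn (by norm_num)
  have hδk : ∀ k : ℕ, (0:ℝ) < ((k:ℝ)+1)⁻¹ := fun k => by positivity
  have hδk1 : ∀ k : ℕ, ((k:ℝ)+1)⁻¹ ≤ 1 := fun k => by
    rw [inv_le_one_iff₀]; right; push_cast; linarith [Nat.cast_nonneg (α := ℝ) k]
  have htendδ : Tendsto (fun k : ℕ => ((k:ℝ)+1)⁻¹) atTop (𝓝 0) := by
    have := tendsto_one_div_add_atTop_nhds_zero_nat (𝕜 := ℝ)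
    simpa [one_div] using this
  have h1 : Tendsto (fun k : ℕ => ∫ y, (infDist y S + 3*((k:ℝ)+1)⁻¹) ^ p ∂μ) atTop (𝓝 L) := by
    rw [hL]
    have : Wp p S μ = ∫ y, (infDist y S) ^ p ∂μ := rfl
    rw [this]
    refine tendsto_integral_of_dominated_convergence _ (fun k => ?_) hbound (fun k => ?_) ?_
    · exact (((aux_cont_rpow hp).comp
        ((continuous_infDist_pt S).add continuous_const))).aestronglyMeasurable
    · refine Filter.Eventually.of_forall fun y => ?_
      have h3 : (0:ℝ) ≤ infDist y S + 3*((k:ℝ)+1)⁻¹ :=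
        add_nonneg infDist_nonneg (by positivity)
      rw [Real.norm_of_nonneg (Real.rpow_nonneg h3 p)]
      refine Real.rpow_le_rpow h3 ?_ hp0
      have := hδk1 k
      linarith [infDist_nonneg (x := y) (s := S)]
    · refine Filter.Eventually.of_forall fun y => ?_
      have hc : Tendsto (fun k : ℕ => infDist y S + 3*((k:ℝ)+1)⁻¹) atTop (𝓝 (infDist y S)) := by
        have := (htendδ.const_mul (3:ℝ)).const_add (infDist y S)
        simpa using this
      exact ((aux_cont_rpow hp).tendsto (infDist y S)).comp hc
  have h2 : Tendsto (fun k : ℕ => ∫ y, ((infDist y S - 3*((k:ℝ)+1)⁻¹) ⊔ 0) ^ p ∂μ) atTop (𝓝 L) := by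
    rw [hL]
    have : Wp p S μ = ∫ y, ((infDist y S - 0) ⊔ 0) ^ p ∂μ := by
      have heq : (fun y : X => ((infDist y S - 0) ⊔ 0) ^ p) = fun y => infDist y S ^ p :=
        funext fun y => by rw [sub_zero, max_eq_left infDist_nonneg]
      rw [heq]; rfl
    rw [this]
    refine tendsto_integral_of_dominated_convergence _ (fun k => ?_) hbound (fun k => ?_) ?_
    · exact (((aux_cont_rpow hp).comp
        (((continuous_infDist_pt S).sub continuous_const).max continuous_const))).aestronglyMeasurable
    · refine Filter.Eventually.of_forall fun y => ?_
      have h3 : (0:ℝ) ≤ (infDist y S - 3*((k:ℝ)+1)⁻¹) ⊔ 0 := le_max_right _ _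
      rw [Real.norm_of_nonneg (Real.rpow_nonneg h3 p)]
      refine Real.rpow_le_rpow h3 ?_ hp0
      rcases max_cases (infDist y S - 3*((k:ℝ)+1)⁻¹) (0:ℝ) with ⟨h, _⟩ | ⟨h, _⟩ <;> rw [h] <;>
        linarith [infDist_nonneg (x := y) (s := S), hδk k]
    · refine Filter.Eventually.of_forall fun y => ?_
      have hc : Tendsto (fun k : ℕ => (infDist y S - 3*((k:ℝ)+1)⁻¹) ⊔ 0) atTop
          (𝓝 ((infDist y S - 0) ⊔ 0)) := by
        have hb : Tendsto (fun k : ℕ => infDist y S - 3*((k:ℝ)+1)⁻¹) atTop (𝓝 (infDist y S - 0)) := by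
          have := (htendδ.const_mul (3:ℝ)).const_sub (infDist y S)
          simpa using this
        exact hb.max tendsto_const_nhds
      exact ((aux_cont_rpow hp).tendsto _).comp hc
  have e1 := h1.eventually_le_const (lt_add_of_pos_right L hε)
  have e2 := h2.eventually_const_le (sub_lt_self L hε)
  obtain ⟨k, hk1, hk2⟩ := (e1.and e2).exists
  exact ⟨((k:ℝ)+1)⁻¹, hδk k, hk1, hk2⟩

end KeyLemmas


section DetMain

open Metric Filter MeasureTheory Topology

lemma det_main {X : Type*} [MetricSpace X] [MeasurableSpace X] [OpensMeasurableSpace X]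
    {p : ℝ} (hp : 1 ≤ p) (μ : Measure X) [IsProbabilityMeasure μ]
    {x₀ : X} (hmom : Integrable (fun y => dist x₀ y ^ p) μ)
    (ν : ℕ → Measure X) (hint : ∀ m (f : X → ℝ), Continuous f → Integrable f (ν m))
    (d : ℕ → X) (hd : DenseRange d)
    (Hplus : ∀ F : Finset ℕ, F.Nonempty → ∀ q : ℚ, 0 ≤ q →
      Tendsto (fun m => ∫ y, (infDist y (d '' ↑F) + (q:ℝ)) ^ p ∂ν m) atTop
        (𝓝 (∫ y, (infDist y (d '' ↑F) + (q:ℝ)) ^ p ∂μ)))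
    (Hminus : ∀ F : Finset ℕ, F.Nonempty → ∀ q : ℚ, 0 ≤ q →
      Tendsto (fun m => ∫ y, ((infDist y (d '' ↑F) - (q:ℝ)) ⊔ 0) ^ p ∂ν m) atTop
        (𝓝 (∫ y, ((infDist y (d '' ↑F) - (q:ℝ)) ⊔ 0) ^ p ∂μ)))
    (R : ℕ → Set X) (R₀ : Set X) (k : ℕ → ℕ) (k₀ : ℕ) (hk₀ : 1 ≤ k₀)
    (hkev : ∀ᶠ n in atTop, k n = k₀)
    (hLi : KurLi R = R₀) (hLs : KurLs R = R₀) :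
    (⋂ n : ℕ, closure (⋃ m ∈ {m : ℕ | n ≤ m}, Cp p (ν m) (k m) (R m))) ⊆ Cp p μ k₀ R₀ := by
  classical
  intro S hS
  -- extract approximating optimal sets
  have hsel : ∀ n : ℕ, ∃ m, n ≤ m ∧ ∃ T : NonemptyCompacts X,
      T ∈ Cp p (ν m) (k m) (R m) ∧ dist S T < ((n:ℝ)+1)⁻¹ := by
    intro n
    have h1 : S ∈ closure (⋃ m ∈ {m : ℕ | n ≤ m}, Cp p (ν m) (k m) (R m)) :=
      Set.mem_iInter.1 hS n
    obtain ⟨T, hT, hdT⟩ := Metric.mem_closure_iff.1 h1 _ (by positivity : (0:ℝ) < ((n:ℝ)+1)⁻¹)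
    obtain ⟨m, hm, hTm⟩ := Set.mem_iUnion₂.1 hT
    exact ⟨m, hm, T, hTm, hdT⟩
  choose φ hφ Sn hSn hSd using hsel
  have hφt : Tendsto φ atTop atTop := tendsto_atTop_mono hφ tendsto_id
  have hkevφ : ∀ᶠ n in atTop, k (φ n) = k₀ := hφt.eventually hkev
  -- Hausdorff distance facts
  have hfin : ∀ n, EMetric.hausdorffEdist (S : Set X) (Sn n : Set X) ≠ ⊤ := fun n =>
    hausdorffEdist_ne_top_of_nonempty_of_bounded S.nonempty (Sn n).nonempty
      S.isCompact.isBounded (Sn n).isCompact.isBounded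
  have hhd : ∀ n, hausdorffDist (S : Set X) (Sn n : Set X) < ((n:ℝ)+1)⁻¹ := fun n => by
    have := hSd n
    rwa [NonemptyCompacts.dist_eq] at this
  have hb1 : ∀ n y, infDist y (Sn n : Set X) ≤ infDist y (S : Set X) + ((n:ℝ)+1)⁻¹ := by
    intro n y
    have h1 : infDist y (Sn n : Set X) ≤ infDist y (S : Set X) +
        hausdorffDist (S : Set X) (Sn n : Set X) :=
      infDist_le_infDist_add_hausdorffDist (hfin n)
    linarith [hhd n]
  have hb2 : ∀ n y, infDist y (S : Set X) ≤ infDist y (Sn n : Set X) + ((n:ℝ)+1)⁻¹ := by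
    intro n y
    have hfin' : EMetric.hausdorffEdist (Sn n : Set X) (S : Set X) ≠ ⊤ := by
      simpa only [EMetric.hausdorffEdist, Metric.hausdorffEDist_comm] using hfin n
    have h1 : infDist y (S : Set X) ≤ infDist y (Sn n : Set X) +
        hausdorffDist (Sn n : Set X) (S : Set X) :=
      infDist_le_infDist_add_hausdorffDist hfin'
    rw [hausdorffDist_comm] at h1
    linarith [hhd n]
  have htendδ : Tendsto (fun n : ℕ => ((n:ℝ)+1)⁻¹) atTop (𝓝 0) := by
    have := tendsto_one_div_add_atTop_nhds_zero_nat (𝕜 := ℝ)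
    simpa [one_div] using this
  -- Part 1a : S ⊆ R₀
  have hsub : (S : Set X) ⊆ R₀ := by
    intro x hx
    rw [← hLs]
    intro U hU
    obtain ⟨ε, hε, hball⟩ := Metric.mem_nhds_iff.1 hU
    rw [Filter.frequently_atTop]
    intro N
    obtain ⟨n, ⟨hn1, hn2⟩⟩ :=
      ((htendδ.eventually (gt_mem_nhds hε)).and (eventually_ge_atTop N)).exists
    have hxd : infDist x (Sn n : Set X) < ε := by
      have := hb1 n x
      rw [infDist_zero_of_mem hx] at this
      linarith
    obtain ⟨y, hyS, hyd⟩ := (infDist_lt_iff (Sn n).nonempty).1 hxd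
    refine ⟨φ n, le_trans hn2 (hφ n), y, ?_, (hSn n).1.1 hyS⟩
    apply hball
    rw [Metric.mem_ball, dist_comm]
    exact hyd
  -- Part 1b : finiteness and cardinality
  have hcard : (S : Set X).Finite ∧ (S : Set X).ncard ≤ k₀ := by
    apply aux_card_limit hk₀
    intro ε hε
    obtain ⟨n, ⟨hn1, hn2⟩⟩ :=
      ((htendδ.eventually (gt_mem_nhds hε)).and hkevφ).exists
    refine ⟨(Sn n : Set X), (hSn n).1.2.1, hn2 ▸ (hSn n).1.2.2.2, (Sn n).nonempty, ?_⟩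
    intro x hx
    have hxd : infDist x (Sn n : Set X) < ε := by
      have := hb1 n x
      rw [infDist_zero_of_mem hx] at this
      linarith
    obtain ⟨t, htS, htd⟩ := (infDist_lt_iff (Sn n).nonempty).1 hxd
    exact ⟨t, htS, htd⟩
  refine ⟨⟨hsub, hcard.1, S.nonempty, hcard.2⟩, ?_⟩
  -- Part 2 : optimality
  intro T hT
  have hTsub : T ⊆ R₀ := hT.1
  have hTf : T.Finite := hT.2.1
  have hTn : T.Nonempty := hT.2.2.1
  have hTc : T.ncard ≤ k₀ := hT.2.2.2
  -- suffices to prove up to ε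
  have key : ∀ ε : ℝ, 0 < ε → Wp p (S : Set X) μ ≤ Wp p T μ + ε := by
    intro ε hε
    obtain ⟨δS, hδS, _, hS2⟩ := keyLimit hp μ hmom S.nonempty (show (0:ℝ) < ε/4 by linarith)
    obtain ⟨δT, hδT, hT1, _⟩ := keyLimit hp μ hmom hTn (show (0:ℝ) < ε/4 by linarith)
    set δ0 : ℝ := min (min δS δT) (ε/4) with hδ0def
    have hδ0 : 0 < δ0 := lt_min (lt_min hδS hδT) (by linarith)
    have hδ0S : δ0 ≤ δS := le_trans (min_le_left _ _) (min_le_left _ _)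
    have hδ0T : δ0 ≤ δT := le_trans (min_le_left _ _) (min_le_right _ _)
    have hδ0ε : δ0 ≤ ε/4 := min_le_right _ _
    -- eventual facts
    have E1 := keyDown hp μ hmom ν hint d hd Hminus hcard.1 S.nonempty hδ0
    have E2 := keyUp hp μ hmom ν hint d hd Hplus hTf hTn hδ0
    have E4 : ∀ᶠ m in atTop, ∀ t ∈ T, (R m ∩ ball t δ0).Nonempty := by
      rw [eventually_all_finite hTf]
      intro t ht
      have htLi : t ∈ KurLi R := by rw [hLi]; exact hTsub ht
      have := htLi (ball t δ0) (ball_mem_nhds t hδ0)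
      filter_upwards [this] with m hm
      obtain ⟨z, hz1, hz2⟩ := hm
      exact ⟨z, hz2, hz1⟩
    have EA : ∀ᶠ n : ℕ in atTop, ((n:ℝ)+1)⁻¹ < δ0 := htendδ.eventually (gt_mem_nhds hδ0)
    obtain ⟨n, hn1, hn2, hn3, hn4, hn5⟩ :=
      (EA.and (hkevφ.and ((hφt.eventually E1).and
        ((hφt.eventually E2).and (hφt.eventually E4))))).exists
    have hp0 : (0:ℝ) ≤ p := le_trans zero_le_one hp
    set c : X → X := fun t => if h : (R (φ n) ∩ ball t δ0).Nonempty then h.some else t with hcdef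
    have hcmem : ∀ t ∈ T, c t ∈ R (φ n) ∧ dist (c t) t < δ0 := by
      intro t ht
      have h := hn5 t ht
      have hmem : c t ∈ R (φ n) ∩ ball t δ0 := by
        simp only [hcdef, dif_pos h]
        exact h.some_mem
      exact ⟨hmem.1, by have := hmem.2; rwa [Metric.mem_ball] at this⟩
    set T' : Set X := c '' T with hT'def
    have hT'ne : T'.Nonempty := hTn.image c
    have hT'f : T'.Finite := hTf.image c
    have hT'sub : T' ⊆ R (φ n) := by
      rintro _ ⟨t, ht, rfl⟩
      exact (hcmem t ht).1
    have hT'card : T'.ncard ≤ k (φ n) := by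
      rw [hn2]
      exact le_trans (Set.ncard_image_le hTf) hTc
    have hopt : Wp p (Sn n : Set X) (ν (φ n)) ≤ Wp p T' (ν (φ n)) :=
      (hSn n).2 T' ⟨hT'sub, hT'f, hT'ne, hT'card⟩
    have hlow : (∫ y, ((infDist y (S : Set X) - 3*δ0) ⊔ 0) ^ p ∂μ) - δ0 ≤
        ∫ y, infDist y (Sn n : Set X) ^ p ∂ν (φ n) := by
      refine hn3 _ (Sn n).nonempty fun y => ?_
      have := hb2 n y
      linarith
    have hup : ∫ y, infDist y T' ^ p ∂ν (φ n) ≤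
        (∫ y, (infDist y T + 3*δ0) ^ p ∂μ) + δ0 := by
      refine hn4 T' hT'ne fun y => ?_
      apply aux_infDist_within hTn _ y
      intro t ht
      exact ⟨c t, Set.mem_image_of_mem c ht, (hcmem t ht).2.le⟩
    have mono1 : ∫ y, ((infDist y (S : Set X) - 3*δS) ⊔ 0) ^ p ∂μ ≤
        ∫ y, ((infDist y (S : Set X) - 3*δ0) ⊔ 0) ^ p ∂μ := by
      refine integral_mono (aux_integrable_minus hp μ hmom S.nonempty (by linarith))
        (aux_integrable_minus hp μ hmom S.nonempty (by linarith)) fun y => ?_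
      refine Real.rpow_le_rpow (le_max_right _ _) ?_ hp0
      exact max_le_max (by linarith) le_rfl
    have mono2 : ∫ y, (infDist y T + 3*δ0) ^ p ∂μ ≤ ∫ y, (infDist y T + 3*δT) ^ p ∂μ := by
      refine integral_mono (aux_integrable_plus hp μ hmom hTn (by linarith))
        (aux_integrable_plus hp μ hmom hTn (by linarith)) fun y => ?_
      exact Real.rpow_le_rpow (add_nonneg infDist_nonneg (by linarith)) (by linarith) hp0
    have hWSn : Wp p (Sn n : Set X) (ν (φ n)) = ∫ y, infDist y (Sn n : Set X) ^ p ∂ν (φ n) := rfl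
    have hWT' : Wp p T' (ν (φ n)) = ∫ y, infDist y T' ^ p ∂ν (φ n) := rfl
    linarith
  by_contra hcon
  push_neg at hcon
  have := key ((Wp p (S : Set X) μ - Wp p T μ)/2) (by linarith)
  linarith

end DetMain


section ProbPart

open Metric Filter MeasureTheory Topology

lemma aux_integrable_dirac {X : Type*} [MeasurableSpace X] {f : X → ℝ}
    (hf : StronglyMeasurable f) (a : X) : Integrable f (Measure.dirac a) := by
  refine ⟨hf.aestronglyMeasurable, ?_⟩
  have hmeas : Measurable fun x => (‖f x‖₊ : ENNReal) :=
    hf.measurable.nnnorm.coe_nnreal_ennreal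
  have hli : (∫⁻ x, (‖f x‖₊ : ENNReal) ∂Measure.dirac a) = (‖f a‖₊ : ENNReal) :=
    lintegral_dirac' a hmeas
  show (∫⁻ x, (‖f x‖₊ : ENNReal) ∂Measure.dirac a) < ⊤
  rw [hli]
  exact ENNReal.coe_lt_top

lemma aux_integral_empMeas {X : Type*} [MeasurableSpace X] {Ω : Type*}
    (Y : ℕ → Ω → X) (ω : Ω) (m : ℕ) {g : X → ℝ} (hg : StronglyMeasurable g) :
    ∫ y, g y ∂(empMeas Y ω m) = (∑ i ∈ Finset.range m, g (Y i ω)) / (m:ℝ) := by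
  show ∫ y, g y ∂(((m : ENNReal))⁻¹ • ∑ i ∈ Finset.range m, Measure.dirac (Y i ω)) = _
  rw [integral_smul_measure,
    integral_finset_sum_measure (fun i _ => aux_integrable_dirac hg (Y i ω))]
  simp only [integral_dirac' _ _ hg]
  rw [ENNReal.toReal_inv, smul_eq_mul, div_eq_inv_mul]
  norm_num

lemma aux_integrable_empMeas {X : Type*} [MeasurableSpace X] {Ω : Type*}
    (Y : ℕ → Ω → X) (ω : Ω) (m : ℕ) {f : X → ℝ} (hf : StronglyMeasurable f) :
    Integrable f (empMeas Y ω m) := by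
  rcases Nat.eq_zero_or_pos m with rfl | hm
  · have h0 : empMeas Y ω 0 = 0 := by simp [empMeas]
    rw [h0]
    exact integrable_zero_measure
  · show Integrable f (((m : ENNReal))⁻¹ • ∑ i ∈ Finset.range m, Measure.dirac (Y i ω))
    refine Integrable.smul_measure ?_ ?_
    · exact integrable_finset_sum_measure.2 fun i _ => aux_integrable_dirac hf (Y i ω)
    · exact ENNReal.inv_ne_top.2 (by exact_mod_cast hm.ne')

lemma aux_slln {X : Type*} [MetricSpace X] [MeasurableSpace X] [OpensMeasurableSpace X]
    (μ : Measure X) {Ω : Type*} [MeasurableSpace Ω] (P : Measure Ω) [IsProbabilityMeasure P]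
    (Y : ℕ → Ω → X) (hYm : ∀ i, Measurable (Y i))
    (hindep : ProbabilityTheory.iIndepFun (m := fun _ => ‹MeasurableSpace X›) Y P)
    (hdist : ∀ i, Measure.map (Y i) P = μ)
    {g : X → ℝ} (hg : Continuous g) (hgi : Integrable g μ) :
    ∀ᵐ ω ∂P, Tendsto (fun m => ∫ y, g y ∂(empMeas Y ω m)) atTop (𝓝 (∫ y, g y ∂μ)) := by
  have hZi : Integrable (fun ω => g (Y 0 ω)) P := by
    have h1 : Integrable g (Measure.map (Y 0) P) := by rw [hdist 0]; exact hgi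
    exact (integrable_map_measure hg.aestronglyMeasurable (hYm 0).aemeasurable).1 h1
  have hident : ∀ i, ProbabilityTheory.IdentDistrib (fun ω => g (Y i ω)) (fun ω => g (Y 0 ω)) P P := by
    intro i
    have hbase : ProbabilityTheory.IdentDistrib (Y i) (Y 0) P P :=
      ⟨(hYm i).aemeasurable, (hYm 0).aemeasurable, by rw [hdist i, hdist 0]⟩
    exact hbase.comp hg.measurable
  have hpair : Pairwise (Function.onFun (ProbabilityTheory.IndepFun · · P) fun i ω => g (Y i ω)) :=
    fun i j hij => (hindep.indepFun hij).comp hg.measurable hg.measurable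
  have hlaw := ProbabilityTheory.strong_law_ae_real _ hZi hpair hident
  have hlim : ∫ y, g y ∂μ = ∫ ω', g (Y 0 ω') ∂P := by
    rw [← hdist 0]
    exact integral_map (hYm 0).aemeasurable hg.aestronglyMeasurable
  filter_upwards [hlaw] with ω hω
  have heq : (fun m : ℕ => ∫ y, g y ∂(empMeas Y ω m)) =
      fun m : ℕ => (∑ i ∈ Finset.range m, g (Y i ω)) / (m:ℝ) :=
    funext fun m => aux_integral_empMeas Y ω m hg.stronglyMeasurable
  rw [heq, hlim]
  exact hω

end ProbPart

/-- **Strong consistency of adaptive clustering (Kuratowski-upper form).**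
For IID samples from `μ ∈ P_p(X)` on a separable metric space, random closed domains
`R_n → R` in the Kuratowski sense and random positive integers `k_n = k` eventually,
almost surely every subsequential Hausdorff-metric limit of empirical cluster-center sets
belongs to `C_p(μ,k,R)`:
`⋂_n closure(⋃_{m ≥ n} C_p(ν̄_m,k_m,R_m)) ⊆ C_p(μ,k,R)`. -/
theorem stmt18 {X : Type*} [MetricSpace X] [TopologicalSpace.SeparableSpace X]
    [MeasurableSpace X] [BorelSpace X]
    (p : ℝ) (hp : 1 ≤ p) (μ : Measure X) [IsProbabilityMeasure μ] (hmom : FinMom p μ)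
    {Ω : Type*} [MeasurableSpace Ω] (ℙ : Measure Ω) [IsProbabilityMeasure ℙ]
    (Y : ℕ → Ω → X) (hYm : ∀ i, Measurable (Y i))
    (hindep : ProbabilityTheory.iIndepFun (m := fun _ => ‹MeasurableSpace X›) Y ℙ)
    (hdist : ∀ i, Measure.map (Y i) ℙ = μ)
    (R : ℕ → Ω → Set X) (R₀ : Ω → Set X)
    (hRc : ∀ n ω, IsClosed (R n ω)) (hR₀ : ∀ ω, IsClosed (R₀ ω))
    (k : ℕ → Ω → ℕ) (k₀ : Ω → ℕ) (hk : ∀ n ω, 1 ≤ k n ω) (hk₀ : ∀ ω, 1 ≤ k₀ ω) :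
    ∀ᵐ ω ∂ℙ,
      ((∀ᶠ n in atTop, k n ω = k₀ ω) ∧
        KurLi (fun n => R n ω) = R₀ ω ∧ KurLs (fun n => R n ω) = R₀ ω) →
      (⋂ n : ℕ, closure (⋃ m ∈ {m : ℕ | n ≤ m}, Cp p (empMeas Y ω m) (k m ω) (R m ω)))
        ⊆ Cp p μ (k₀ ω) (R₀ ω) := by
  obtain ⟨x₀, hmomI⟩ := hmom
  haveI hNE : Nonempty X := ⟨x₀⟩
  set d : ℕ → X := TopologicalSpace.denseSeq X with hddef
  have hd : DenseRange d := TopologicalSpace.denseRange_denseSeq X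
  have main : ∀ᵐ ω ∂ℙ, ∀ (F : Finset ℕ) (q : ℚ), F.Nonempty → 0 ≤ q →
      (Tendsto (fun m => ∫ y, (infDist y (d '' ↑F) + (q:ℝ)) ^ p ∂(empMeas Y ω m)) atTop
        (𝓝 (∫ y, (infDist y (d '' ↑F) + (q:ℝ)) ^ p ∂μ)) ∧
       Tendsto (fun m => ∫ y, ((infDist y (d '' ↑F) - (q:ℝ)) ⊔ 0) ^ p ∂(empMeas Y ω m)) atTop
        (𝓝 (∫ y, ((infDist y (d '' ↑F) - (q:ℝ)) ⊔ 0) ^ p ∂μ))) := by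
    rw [ae_all_iff]
    intro F
    rw [ae_all_iff]
    intro q
    by_cases hF : F.Nonempty
    · by_cases hq : (0:ℚ) ≤ q
      · have hdF : (d '' ↑F).Nonempty := Set.Nonempty.image d (Finset.coe_nonempty.2 hF)
        have hqR : (0:ℝ) ≤ (q:ℝ) := by exact_mod_cast hq
        have h1 := aux_slln μ ℙ Y hYm hindep hdist
          ((aux_cont_rpow hp).comp ((continuous_infDist_pt _).add continuous_const))
          (aux_integrable_plus hp μ hmomI hdF hqR)
        have h2 := aux_slln μ ℙ Y hYm hindep hdist
          ((aux_cont_rpow hp).comp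
            (((continuous_infDist_pt _).sub continuous_const).max continuous_const))
          (aux_integrable_minus hp μ hmomI hdF hqR)
        filter_upwards [h1, h2] with ω hω1 hω2
        exact fun _ _ => ⟨hω1, hω2⟩
      · exact ae_of_all _ fun ω _ h => absurd h hq
    · exact ae_of_all _ fun ω h _ => absurd h hF
  filter_upwards [main] with ω hω
  rintro ⟨hkev, hLi, hLs⟩
  exact det_main hp μ hmomI (fun m => empMeas Y ω m)
    (fun m f hf => aux_integrable_empMeas Y ω m hf.stronglyMeasurable)
    d hd (fun F hF q hq => (hω F q hF hq).1) (fun F hF q hq => (hω F q hF hq).2)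
    (fun n => R n ω) (R₀ ω) (fun n => k n ω) (k₀ ω) (hk₀ ω) hkev hLi hLs
end
end

section
/- Let (X,d) be a Heine–Borel metric space, p ≥ 1, and μ ∈ P_p(X) with #supp(μ) = ∞ and a unique maximizer k* of the discrete second differences Δ²m_{k,p}(μ) := m_{k+1,p}(μ) + m_{k−1,p}(μ) − 2m_{k,p}(μ) (with convention m_{0,p}(μ) = 0). Then the elbow-method functional k^elb_p(μ) := min argmax_k Δ²m_{k,p}(μ) is continuous at μ with respect to the p-Wasserstein topology: if μ_n → μ in the p-Wasserstein sense, then k^elb_p(μ_n) = k^elb_p(μ) = k* for all sufficiently large n. -/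
open Filter MeasureTheory Topology TopologicalSpace Metric Set

noncomputable section

variable {X : Type*} [MetricSpace X] [MeasurableSpace X]

/-- The discrete second difference `Δ²m_{k,p}(μ) = m_{k+1,p}(μ) + m_{k−1,p}(μ) − 2m_{k,p}(μ)`
of the unrestricted optimal clustering costs (with the convention `m_{0,p}(μ) = 0`, which
holds definitionally since `sInf ∅ = 0` in `ℝ`). -/
def elbowDiff {X : Type*} [MetricSpace X] [MeasurableSpace X] (p : ℝ) (μ : Measure X)
    (k : ℕ) : ℝ :=
  mCost p μ (k + 1) Set.univ + mCost p μ (k - 1) Set.univ - 2 * mCost p μ k Set.univ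

/-!
The costs `m_k(μ_n)` converge to `m_k(μ)` for every `k`. From above this is the convergence of
`W_p(S, μ_n)` for a fixed center set `S`, as `d(·, S)ᵖ` has `p`-growth. From below, the centers
of any `S` are moved onto a fixed finite net of a large ball (those far away onto its center);
near the ball this costs little, and far from it the uniformly small tails of the `p`-th moments
pay for it, so `m_k(μ_n)` is bounded below by the minimum over finitely many convergent costs.

Since moreover `m_k(μ) → 0` and `k ↦ m_k` is antitone and nonnegative, the unique maximizer `k*`
of `Δ²m_k(μ)` has `Δ²m_{k*}(μ) > 0`. Beyond an index `K` with `m_K(μ) < Δ²m_{k*}(μ) / 4`, every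
`Δ²m_j(μ_n)` is at most `2 m_K(μ_n)`, hence small for large `n`, and the finitely many strict
inequalities for `j ≤ K` pass to `μ_n` for large `n`.
-/

lemma Real.add_rpow_le_two_rpow_mul {p a b : ℝ} (hp : 0 ≤ p) (ha : 0 ≤ a) (hb : 0 ≤ b) :
    (a + b) ^ p ≤ 2 ^ p * (a ^ p + b ^ p) := calc
  (a + b) ^ p ≤ (2 * max a b) ^ p := by
    rw [two_mul]; gcongr
    exacts [le_max_left a b, le_max_right a b]
  _ = 2 ^ p * max (a ^ p) (b ^ p) := by
    rw [Real.mul_rpow zero_le_two (ha.trans (le_max_left a b)), Real.rpow_max ha hb hp]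
  _ ≤ 2 ^ p * (a ^ p + b ^ p) := by
    gcongr; exact max_le_add_of_nonneg (by positivity) (by positivity)

lemma exists_pos_rpow_add_le {p : ℝ} (hp : 0 ≤ p) (C : ℝ) {η : ℝ} (hη : 0 < η) :
    ∃ δ > 0, ∀ a ∈ Icc 0 C, (a + δ) ^ p ≤ a ^ p + η := by
  obtain ⟨δ₀, hδ₀, hunif⟩ := Metric.uniformContinuousOn_iff.1
    ((isCompact_Icc (a := 0) (b := C + 1)).uniformContinuousOn_of_continuous
      (continuous_id.rpow_const fun _ => Or.inr hp).continuousOn) η hη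
  set δ := min (δ₀ / 2) 1
  have hδ1 : δ ≤ 1 := min_le_right _ _
  have hδ : δ < δ₀ := (min_le_left _ _).trans_lt (half_lt_self hδ₀)
  refine ⟨δ, by positivity, fun a ⟨ha0, haC⟩ => ?_⟩
  have := hunif (a + δ) ⟨by positivity, by linarith⟩ a ⟨ha0, by linarith⟩
    (by rwa [Real.dist_eq, add_sub_cancel_left, abs_of_pos (by positivity)])
  rw [Real.dist_eq, id, id] at this
  linarith [le_abs_self ((a + δ) ^ p - a ^ p)]

lemma tendsto_of_eventually_lt_of_tendsto_add {ι : Type*} {l : Filter ι} {a b : ι → ℝ}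
    {A B : ℝ} (ha : ∀ c < A, ∀ᶠ i in l, c < a i) (hb : ∀ c < B, ∀ᶠ i in l, c < b i)
    (hab : Tendsto (fun i => a i + b i) l (𝓝 (A + B))) : Tendsto a l (𝓝 A) := by
  refine tendsto_order.2 ⟨ha, fun c hc => ?_⟩
  filter_upwards [hb (B - (c - A) / 2) (by linarith),
    hab.eventually (eventually_lt_nhds (by linarith : A + B < A + B + (c - A) / 2))]
    with i hbi habi
  linarith

def secondDiff (a : ℕ → ℝ) (k : ℕ) : ℝ :=
  a (k + 1) + a (k - 1) - 2 * a k

lemma secondDiff_succ (a : ℕ → ℝ) (k : ℕ) :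
    secondDiff a (k + 1) = (a (k + 2) - a (k + 1)) - (a (k + 1) - a k) := by
  simp only [secondDiff, Nat.add_sub_cancel]; ring

/-- Otherwise the increments `a (i + 1) - a i` would form an antitone sequence tending to `0`
with the negative term `a (k + 2) - a (k + 1)`. -/
lemma secondDiff_pos_of_isUniqueMax {a : ℕ → ℝ} {L : ℝ} (ha : Tendsto a atTop (𝓝 L))
    {k : ℕ} (hk : a (k + 1) ≤ a k)
    (hmax : ∀ j, 1 ≤ j → j ≠ k → secondDiff a j < secondDiff a k) :
    0 < secondDiff a k := by
  by_contra! hneg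
  set b : ℕ → ℝ := fun i => a (i + 1) - a i
  have hb : Tendsto b atTop (𝓝 0) := by
    simpa using ((tendsto_add_atTop_iff_nat 1).2 ha).sub ha
  have hle : ∀ i, secondDiff a (i + 1) ≤ 0 := fun i => by
    rcases eq_or_ne (i + 1) k with h | h
    · rwa [h]
    · exact (hmax (i + 1) le_add_self h).le.trans hneg
  have hanti : Antitone b := antitone_nat_of_succ_le fun i => by
    have := hle i; rw [secondDiff_succ] at this; linarith
  have hdrop : secondDiff a (k + 1) < 0 :=
    (hmax (k + 1) le_add_self (by omega)).trans_le hneg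
  rw [secondDiff_succ] at hdrop
  have : 0 ≤ b (k + 1) := hanti.le_of_tendsto hb (k + 1)
  simp only [b] at this
  linarith

lemma eventually_secondDiff_lt_of_tendsto {f : ℕ → ℕ → ℝ} {a : ℕ → ℝ}
    (hf : ∀ k, Tendsto (fun n => f n k) atTop (𝓝 (a k))) (ha : Tendsto a atTop (𝓝 0))
    (ha_anti : AntitoneOn a (Ici 1)) (hf_anti : ∀ n, AntitoneOn (f n) (Ici 1))
    (hf_nonneg : ∀ n k, 0 ≤ f n k) {k : ℕ} (hk : 1 ≤ k)
    (hmax : ∀ j, 1 ≤ j → j ≠ k → secondDiff a j < secondDiff a k) :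
    ∀ᶠ n in atTop, ∀ j, 1 ≤ j → j ≠ k → secondDiff (f n) j < secondDiff (f n) k := by
  have hpos : 0 < secondDiff a k :=
    secondDiff_pos_of_isUniqueMax ha (ha_anti hk (le_add_right hk) k.le_succ) hmax
  set ε := secondDiff a k / 4 with hε
  have hε0 : 0 < ε := by positivity
  obtain ⟨K, hK, hK1⟩ :=
    ((ha.eventually (eventually_lt_nhds hε0)).and (eventually_ge_atTop 1)).exists
  have hdiff : ∀ j, Tendsto (fun n => secondDiff (f n) j) atTop (𝓝 (secondDiff a j)) :=
    fun j => ((hf _).add (hf _)).sub ((hf _).const_mul 2)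
  have hsmall : ∀ᶠ n in atTop, ∀ j ∈ Iic K, 1 ≤ j → j ≠ k →
      secondDiff (f n) j < secondDiff (f n) k := by
    refine (eventually_all_finite (finite_Iic K)).2 fun j _ => ?_
    by_cases hj : 1 ≤ j ∧ j ≠ k
    · filter_upwards [(hdiff j).eventually_lt (hdiff k) (hmax j hj.1 hj.2)] with n h _ _
      exact h
    · exact Eventually.of_forall fun n h1 h2 => absurd ⟨h1, h2⟩ hj
  filter_upwards [hsmall, (hf K).eventually (eventually_lt_nhds hK),
    (hdiff k).eventually (eventually_gt_nhds (by linarith : 3 * ε < secondDiff a k))]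
    with n hsmall hfK hfk j hj hjk
  rcases le_or_gt j K with hjK | hKj
  · exact hsmall j hjK hj hjk
  · have h₁ : f n (j + 1) ≤ f n K := hf_anti n hK1 (by simp only [mem_Ici]; omega) (by omega)
    have h₂ : f n (j - 1) ≤ f n K := hf_anti n hK1 (by simp only [mem_Ici]; omega) (by omega)
    have h₃ := hf_nonneg n j
    unfold secondDiff at hfk ⊢
    linarith

section ClusteringCost

lemma Wp_nonneg (p : ℝ) (S : Set X) (ν : Measure X) : 0 ≤ Wp p S ν :=
  integral_nonneg fun _ => Real.rpow_nonneg infDist_nonneg p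

lemma feas_singleton {α : Type*} {k : ℕ} (hk : 1 ≤ k) {R : Set α} {x : α} (hx : x ∈ R) :
    Feas k R {x} :=
  ⟨singleton_subset_iff.2 hx, finite_singleton x, singleton_nonempty x, by simpa using hk⟩

lemma mCost_zero (p : ℝ) (ν : Measure X) (R : Set X) : mCost p ν 0 R = 0 := by
  have : {S : Set X | Feas 0 R S} = ∅ :=
    eq_empty_of_forall_notMem fun S ⟨_, hfin, hne, hcard⟩ =>
      ((ncard_pos hfin).2 hne).ne' (Nat.le_zero.1 hcard)
  rw [mCost, this, image_empty, Real.sInf_empty]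

lemma bddBelow_Wp_image (p : ℝ) (ν : Measure X) (k : ℕ) (R : Set X) :
    BddBelow ((fun S => Wp p S ν) '' {S | Feas k R S}) :=
  ⟨0, by rintro _ ⟨S, -, rfl⟩; exact Wp_nonneg p S ν⟩

lemma Wp_image_nonempty (p : ℝ) (ν : Measure X) {k : ℕ} (hk : 1 ≤ k) {R : Set X}
    (hR : R.Nonempty) : ((fun S => Wp p S ν) '' {S | Feas k R S}).Nonempty :=
  let ⟨_, hx⟩ := hR
  ⟨_, _, feas_singleton hk hx, rfl⟩

lemma mCost_nonneg (p : ℝ) (ν : Measure X) (k : ℕ) (R : Set X) : 0 ≤ mCost p ν k R :=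
  Real.sInf_nonneg (by rintro _ ⟨S, -, rfl⟩; exact Wp_nonneg p S ν)

lemma mCost_le_Wp {p : ℝ} {ν : Measure X} {k : ℕ} {R S : Set X} (hS : Feas k R S) :
    mCost p ν k R ≤ Wp p S ν :=
  csInf_le (bddBelow_Wp_image p ν k R) ⟨S, hS, rfl⟩

lemma le_mCost {p c : ℝ} {ν : Measure X} {k : ℕ} (hk : 1 ≤ k) {R : Set X} (hR : R.Nonempty)
    (h : ∀ S, Feas k R S → c ≤ Wp p S ν) : c ≤ mCost p ν k R :=
  le_csInf (Wp_image_nonempty p ν hk hR) (by rintro _ ⟨S, hS, rfl⟩; exact h S hS)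

lemma exists_feas_Wp_lt {p c : ℝ} {ν : Measure X} {k : ℕ} (hk : 1 ≤ k) {R : Set X}
    (hR : R.Nonempty) (h : mCost p ν k R < c) : ∃ S, Feas k R S ∧ Wp p S ν < c := by
  obtain ⟨_, ⟨S, hS, rfl⟩, hlt⟩ := exists_lt_of_csInf_lt (Wp_image_nonempty p ν hk hR) h
  exact ⟨S, hS, hlt⟩

lemma mCost_antitoneOn (p : ℝ) (ν : Measure X) {R : Set X} (hR : R.Nonempty) :
    AntitoneOn (fun k => mCost p ν k R) (Ici 1) := fun _ hk l _ hkl =>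
  csInf_le_csInf (bddBelow_Wp_image p ν l R) (Wp_image_nonempty p ν hk hR)
    (image_mono fun _ ⟨h₁, h₂, h₃, h₄⟩ => ⟨h₁, h₂, h₃, h₄.trans hkl⟩)

end ClusteringCost

section MetricBounds

variable {α : Type*} [PseudoMetricSpace α] {p M : ℝ}

lemma dist_rpow_le_two_rpow_mul (hp : 0 ≤ p) (x₀ y z : α) :
    dist y z ^ p ≤ 2 ^ p * dist x₀ y ^ p + 2 ^ p * dist x₀ z ^ p := calc
  dist y z ^ p ≤ (dist x₀ y + dist x₀ z) ^ p := by
    gcongr; exact dist_triangle_left y z x₀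
  _ ≤ _ := by rw [← mul_add]; exact Real.add_rpow_le_two_rpow_mul hp dist_nonneg dist_nonneg

lemma infDist_rpow_le (hp : 0 ≤ p) (x₀ : α) {S : Set α} {s : α} (hs : s ∈ S) (y : α) :
    infDist y S ^ p ≤ 2 ^ p * dist x₀ y ^ p + 2 ^ p * dist x₀ s ^ p :=
  (Real.rpow_le_rpow infDist_nonneg (infDist_le_dist_of_mem hs) hp).trans
    (dist_rpow_le_two_rpow_mul hp x₀ y s)

lemma continuous_dist_rpow (hp : 0 ≤ p) (x₀ : α) : Continuous fun y => dist x₀ y ^ p :=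
  (continuous_const.dist continuous_id).rpow_const fun _ => Or.inr hp

lemma continuous_infDist_rpow (hp : 0 ≤ p) (S : Set α) : Continuous fun y => infDist y S ^ p :=
  (continuous_infDist_pt S).rpow_const fun _ => Or.inr hp

def rpowTail (p : ℝ) (x₀ : α) (M : ℝ) (y : α) : ℝ :=
  dist x₀ y ^ p - min (dist x₀ y ^ p) M

variable {x₀ : α}

lemma rpowTail_nonneg (y : α) : 0 ≤ rpowTail p x₀ M y :=
  sub_nonneg.2 (min_le_left _ _)

lemma rpowTail_le (hM : 0 ≤ M) (y : α) : rpowTail p x₀ M y ≤ dist x₀ y ^ p :=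
  sub_le_self _ (le_min (Real.rpow_nonneg dist_nonneg p) hM)

lemma continuous_rpowTail (hp : 0 ≤ p) : Continuous (rpowTail p x₀ M) :=
  (continuous_dist_rpow hp x₀).sub ((continuous_dist_rpow hp x₀).min continuous_const)

lemma dist_rpow_le_two_mul_rpowTail (hp : 0 < p) (hM : 0 ≤ M) {y : α}
    (hy : (2 * M) ^ p⁻¹ ≤ dist x₀ y) : dist x₀ y ^ p ≤ 2 * rpowTail p x₀ M y := by
  have h2M : 2 * M ≤ dist x₀ y ^ p := by
    calc 2 * M = ((2 * M) ^ p⁻¹) ^ p := (Real.rpow_inv_rpow (by positivity) hp.ne').symm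
      _ ≤ dist x₀ y ^ p := by gcongr
  rw [rpowTail, min_eq_right (by linarith)]
  linarith

end MetricBounds

section Integrability

lemma integrable_of_nonneg_of_le_mul_add {α : Type*} [MeasurableSpace α] {ν : Measure α}
    [IsFiniteMeasure ν] {f g : α → ℝ} (hf : AEStronglyMeasurable f ν) (hf0 : ∀ y, 0 ≤ f y)
    (hg : Integrable g ν) {C₁ C₂ : ℝ} (hfg : ∀ y, f y ≤ C₁ * g y + C₂) : Integrable f ν :=
  ((hg.const_mul C₁).add (integrable_const C₂)).mono' hf
    (Eventually.of_forall fun y => by rw [Real.norm_of_nonneg (hf0 y)]; exact hfg y)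

lemma tendsto_integral_min_natCast {α : Type*} [MeasurableSpace α] {ν : Measure α}
    {φ : α → ℝ} (hφ : Integrable φ ν) :
    Tendsto (fun M : ℕ => ∫ y, min (φ y) M ∂ν) atTop (𝓝 (∫ y, φ y ∂ν)) := by
  refine tendsto_integral_of_dominated_convergence (fun y => ‖φ y‖)
    (fun M => hφ.aestronglyMeasurable.inf aestronglyMeasurable_const) hφ.norm
    (fun M => Eventually.of_forall fun y => ?_) (Eventually.of_forall fun y => ?_)
  · rcases le_total (φ y) M with h | h
    · rw [min_eq_left h]
    · rw [min_eq_right h, Real.norm_natCast]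
      exact h.trans (Real.le_norm_self _)
  · obtain ⟨M₀, hM₀⟩ := exists_nat_ge (φ y)
    exact tendsto_const_nhds.congr' (eventually_atTop.2 ⟨M₀, fun M hM =>
      (min_eq_left (hM₀.trans (Nat.cast_le.2 hM))).symm⟩)

variable [BorelSpace X] {p M : ℝ} {ν : Measure X} [IsFiniteMeasure ν]

lemma FinMom.integrable_dist_rpow (h : FinMom p ν) (hp : 0 ≤ p) (x₀ : X) :
    Integrable (fun y => dist x₀ y ^ p) ν := by
  obtain ⟨x₁, hx₁⟩ := h
  exact integrable_of_nonneg_of_le_mul_add (continuous_dist_rpow hp x₀).aestronglyMeasurable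
    (fun _ => Real.rpow_nonneg dist_nonneg p) hx₁ (C₁ := 2 ^ p) (C₂ := 2 ^ p * dist x₁ x₀ ^ p)
    fun y => by linarith [dist_rpow_le_two_rpow_mul hp x₁ x₀ y]

variable {x₀ : X}

lemma integrable_infDist_rpow (hg : Integrable (fun y => dist x₀ y ^ p) ν) (hp : 0 ≤ p)
    {S : Set X} (hS : S.Nonempty) : Integrable (fun y => infDist y S ^ p) ν :=
  let ⟨_, hs⟩ := hS
  integrable_of_nonneg_of_le_mul_add (continuous_infDist_rpow hp S).aestronglyMeasurable
    (fun _ => Real.rpow_nonneg infDist_nonneg p) hg (infDist_rpow_le hp x₀ hs)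

lemma integrable_rpowTail (hg : Integrable (fun y => dist x₀ y ^ p) ν) (hp : 0 ≤ p)
    (hM : 0 ≤ M) : Integrable (rpowTail p x₀ M) ν :=
  integrable_of_nonneg_of_le_mul_add (continuous_rpowTail hp).aestronglyMeasurable
    rpowTail_nonneg hg (C₁ := 1) (C₂ := 0) fun y => by simpa using rpowTail_le hM y

lemma exists_integral_rpowTail_lt (hg : Integrable (fun y => dist x₀ y ^ p) ν) (hp : 0 ≤ p)
    {ε : ℝ} (hε : 0 < ε) : ∃ M : ℝ, 0 ≤ M ∧ ∫ y, rpowTail p x₀ M y ∂ν < ε := by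
  obtain ⟨M, hM⟩ := ((tendsto_integral_min_natCast hg).eventually
    (eventually_gt_nhds (sub_lt_self _ hε))).exists
  have htail := integrable_rpowTail hg hp M.cast_nonneg
  refine ⟨M, M.cast_nonneg, ?_⟩
  have : ∫ y, min (dist x₀ y ^ p) M ∂ν = ∫ y, dist x₀ y ^ p ∂ν - ∫ y, rpowTail p x₀ M y ∂ν := by
    rw [← integral_sub hg htail]; simp only [rpowTail, sub_sub_cancel]
  linarith

end Integrability

section Convergence

variable [BorelSpace X] {p : ℝ} {μ : Measure X} {μn : ℕ → Measure X}

lemma eventually_lt_integral_of_weakly_tendsto [IsFiniteMeasure μ] [∀ n, IsFiniteMeasure (μn n)]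
    (hweak : ∀ f : BoundedContinuousFunction X ℝ,
      Tendsto (fun n => ∫ y, f y ∂μn n) atTop (𝓝 (∫ y, f y ∂μ)))
    {φ : X → ℝ} (hφ : Continuous φ) (hφ0 : ∀ y, 0 ≤ φ y) (hφμ : Integrable φ μ)
    (hφn : ∀ n, Integrable φ (μn n)) {c : ℝ} (hc : c < ∫ y, φ y ∂μ) :
    ∀ᶠ n in atTop, c < ∫ y, φ y ∂μn n := by
  obtain ⟨M, hM⟩ :=
    ((tendsto_integral_min_natCast hφμ).eventually (eventually_gt_nhds hc)).exists
  have hbound : ∀ y, ‖min (φ y) M‖ ≤ M := fun y => by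
    rw [Real.norm_of_nonneg (le_min (hφ0 y) M.cast_nonneg)]; exact min_le_right _ _
  let φM : BoundedContinuousFunction X ℝ :=
    .ofNormedAddCommGroup (fun y => min (φ y) M) (hφ.min continuous_const) M hbound
  filter_upwards [(hweak φM).eventually (eventually_gt_nhds hM)] with n hn
  exact hn.trans_le (integral_mono (φM.integrable _) (hφn n) fun y => min_le_left _ _)

/-- `WassTendsto p μn μ` with its base point `x₀` fixed. The integrability fields do not follow
from `moment`, since the integral of a non-integrable function is `0`. -/
structure WassConvAt (p : ℝ) (μn : ℕ → Measure X) (μ : Measure X) (x₀ : X) : Prop where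
  weak : ∀ f : BoundedContinuousFunction X ℝ,
    Tendsto (fun n => ∫ y, f y ∂μn n) atTop (𝓝 (∫ y, f y ∂μ))
  moment : Tendsto (fun n => ∫ y, dist x₀ y ^ p ∂μn n) atTop (𝓝 (∫ y, dist x₀ y ^ p ∂μ))
  integrable : Integrable (fun y => dist x₀ y ^ p) μ
  integrable_seq : ∀ n, Integrable (fun y => dist x₀ y ^ p) (μn n)

variable [IsProbabilityMeasure μ] [∀ n, IsProbabilityMeasure (μn n)] {x₀ : X}

/-- Apply the weak lower bound to `f` and to `C₁ d(x₀, ·)ᵖ + C₂ - f`, whose integrals sum to a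
convergent sequence. -/
lemma WassConvAt.tendsto_integral (h : WassConvAt p μn μ x₀) (hp : 0 ≤ p) {f : X → ℝ}
    (hf : Continuous f) (hf0 : ∀ y, 0 ≤ f y) {C₁ C₂ : ℝ}
    (hfle : ∀ y, f y ≤ C₁ * dist x₀ y ^ p + C₂) :
    Tendsto (fun n => ∫ y, f y ∂μn n) atTop (𝓝 (∫ y, f y ∂μ)) := by
  set G : X → ℝ := fun y => C₁ * dist x₀ y ^ p + C₂ - f y
  have hG : Continuous G :=
    (((continuous_dist_rpow hp x₀).const_smul C₁).add continuous_const).sub hf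
  have hG0 : ∀ y, 0 ≤ G y := fun y => sub_nonneg.2 (hfle y)
  have hGle : ∀ y, G y ≤ C₁ * dist x₀ y ^ p + C₂ := fun y => by linarith [hf0 y]
  have hint : ∀ ν : Measure X, [IsProbabilityMeasure ν] →
      Integrable (fun y => dist x₀ y ^ p) ν → Integrable f ν ∧ Integrable G ν ∧
        ∫ y, f y ∂ν + ∫ y, G y ∂ν = C₁ * ∫ y, dist x₀ y ^ p ∂ν + C₂ := fun ν _ hg => by
    have hfi := integrable_of_nonneg_of_le_mul_add hf.aestronglyMeasurable hf0 hg hfle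
    have hGi := integrable_of_nonneg_of_le_mul_add hG.aestronglyMeasurable hG0 hg hGle
    refine ⟨hfi, hGi, ?_⟩
    rw [← integral_add hfi hGi]
    simp only [G, add_sub_cancel]
    rw [integral_add (hg.const_mul C₁) (integrable_const C₂), integral_const_mul,
      integral_const, probReal_univ, one_smul]
  obtain ⟨hfμ, hGμ, hsumμ⟩ := hint μ h.integrable
  have hintn := fun n => hint (μn n) (h.integrable_seq n)
  refine tendsto_of_eventually_lt_of_tendsto_add
    (fun c hc => eventually_lt_integral_of_weakly_tendsto h.weak hf hf0 hfμ
      (fun n => (hintn n).1) hc)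
    (fun c hc => eventually_lt_integral_of_weakly_tendsto h.weak hG hG0 hGμ
      (fun n => (hintn n).2.1) hc) ?_
  simp only [hsumμ, (hintn _).2.2]
  exact (h.moment.const_mul C₁).add_const C₂

lemma WassConvAt.exists_eventually_integral_rpowTail_lt (h : WassConvAt p μn μ x₀)
    (hp : 0 ≤ p) {ε : ℝ} (hε : 0 < ε) :
    ∃ M : ℝ, 0 ≤ M ∧ ∀ᶠ n in atTop, ∫ y, rpowTail p x₀ M y ∂μn n < ε := by
  obtain ⟨M, hM, hlt⟩ := exists_integral_rpowTail_lt h.integrable hp hε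
  exact ⟨M, hM, (h.tendsto_integral hp (continuous_rpowTail hp) rpowTail_nonneg (C₁ := 1)
    (C₂ := 0) fun y => by simpa using rpowTail_le hM y).eventually (eventually_lt_nhds hlt)⟩

lemma WassConvAt.tendsto_Wp (h : WassConvAt p μn μ x₀) (hp : 0 ≤ p) {S : Set X}
    (hS : S.Nonempty) : Tendsto (fun n => Wp p S (μn n)) atTop (𝓝 (Wp p S μ)) :=
  let ⟨_, hs⟩ := hS
  h.tendsto_integral hp (continuous_infDist_rpow hp S)
    (fun _ => Real.rpow_nonneg infDist_nonneg p) (infDist_rpow_le hp x₀ hs)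

lemma WassConvAt.eventually_mCost_lt (h : WassConvAt p μn μ x₀) (hp : 0 ≤ p) {k : ℕ}
    (hk : 1 ≤ k) {c : ℝ} (hc : mCost p μ k univ < c) :
    ∀ᶠ n in atTop, mCost p (μn n) k univ < c := by
  obtain ⟨S, hS, hSc⟩ := exists_feas_Wp_lt hk ⟨x₀, mem_univ x₀⟩ hc
  filter_upwards [(h.tendsto_Wp hp hS.2.2.1).eventually (eventually_lt_nhds hSc)] with n hn
  exact (mCost_le_Wp hS).trans_lt hn

end Convergence

section Quantization

variable {α : Type*} [PseudoMetricSpace α]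

lemma exists_finite_net [ProperSpace α] (x₀ : α) {R δ : ℝ} (hR : 0 ≤ R) (hδ : 0 < δ) :
    ∃ N : Set α, N.Finite ∧ x₀ ∈ N ∧ N ⊆ closedBall x₀ R ∧
      ∀ z ∈ closedBall x₀ R, ∃ w ∈ N, dist z w < δ := by
  obtain ⟨N, hNsub, hNfin, hcov⟩ :=
    finite_approx_of_totallyBounded (isCompact_closedBall x₀ R).totallyBounded δ hδ
  refine ⟨insert x₀ N, hNfin.insert x₀, mem_insert x₀ N,
    insert_subset (mem_closedBall_self hR) hNsub, fun z hz => ?_⟩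
  obtain ⟨w, hw, hzw⟩ := mem_iUnion₂.1 (hcov hz)
  exact ⟨w, mem_insert_of_mem x₀ hw, hzw⟩

/-- Centers within `2r` of `x₀` are moved to a nearby net point, the others to `x₀`. -/
lemma exists_subset_infDist_le_add {N S : Set α} {x₀ : α} {r δ : ℝ} (hδ : 0 ≤ δ)
    (hx₀ : x₀ ∈ N) (hN : ∀ z ∈ closedBall x₀ (2 * r), ∃ w ∈ N, dist z w < δ)
    (hS : S.Finite) (hSne : S.Nonempty) :
    ∃ T ⊆ N, T.Finite ∧ T.Nonempty ∧ T.ncard ≤ S.ncard ∧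
      ∀ y, dist x₀ y < r → infDist y T ≤ infDist y S + δ := by
  classical
  choose! ρ hρN hρ using hN
  set σ : α → α := fun z => if z ∈ closedBall x₀ (2 * r) then ρ z else x₀
  refine ⟨σ '' S, ?_, hS.image σ, hSne.image σ, ncard_image_le hS, fun y hy => ?_⟩
  · rintro _ ⟨z, -, rfl⟩
    by_cases hz : z ∈ closedBall x₀ (2 * r)
    · rw [show σ z = ρ z from if_pos hz]; exact hρN z hz
    · rwa [show σ z = x₀ from if_neg hz]
  obtain ⟨s, hs, hys⟩ := hS.isCompact.exists_infDist_eq_dist hSne y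
  rw [hys]
  by_cases hs2 : s ∈ closedBall x₀ (2 * r)
  · calc infDist y (σ '' S) ≤ dist y (ρ s) := infDist_le_dist_of_mem ⟨s, hs, if_pos hs2⟩
      _ ≤ dist y s + dist s (ρ s) := dist_triangle _ _ _
      _ ≤ dist y s + δ := by linarith [hρ s hs2]
  · have hfar : 2 * r < dist s x₀ := not_le.1 hs2
    calc infDist y (σ '' S) ≤ dist y x₀ := infDist_le_dist_of_mem ⟨s, hs, if_neg hs2⟩
      _ ≤ dist y s + δ := by
        linarith [dist_triangle s y x₀, dist_comm s y, dist_comm x₀ y]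

variable {p M r δ η : ℝ} {x₀ : α} {S T : Set α}

lemma infDist_rpow_le_add_rpowTail (hp : 0 < p) (hr : 0 ≤ r)
    (hfar : ∀ y, r ≤ dist x₀ y → dist x₀ y ^ p ≤ 2 * rpowTail p x₀ M y) (hδ : 0 ≤ δ)
    (hη : 0 ≤ η) (hδη : ∀ a ∈ Icc 0 (3 * r), (a + δ) ^ p ≤ a ^ p + η)
    (hT : T ⊆ closedBall x₀ (2 * r)) (hTne : T.Nonempty)
    (hnear : ∀ y, dist x₀ y < r → infDist y T ≤ infDist y S + δ) (y : α) :
    infDist y T ^ p ≤ infDist y S ^ p + η + 2 * 3 ^ p * rpowTail p x₀ M y := by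
  have hTy : infDist y T ≤ dist x₀ y + 2 * r := by
    obtain ⟨t, ht⟩ := hTne
    calc infDist y T ≤ dist y t := infDist_le_dist_of_mem ht
      _ ≤ dist x₀ y + dist x₀ t := dist_triangle_left y t x₀
      _ ≤ dist x₀ y + 2 * r := by linarith [mem_closedBall'.1 (hT ht)]
  have hS0 : 0 ≤ infDist y S ^ p := Real.rpow_nonneg infDist_nonneg p
  have htail0 : 0 ≤ 3 ^ p * rpowTail p x₀ M y :=
    mul_nonneg (by positivity) (rpowTail_nonneg y)
  rcases lt_or_ge (dist x₀ y) r with hy | hy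
  · set a := min (infDist y S) (3 * r)
    have ha : a ∈ Icc 0 (3 * r) := ⟨le_min infDist_nonneg (by linarith), min_le_right _ _⟩
    calc infDist y T ^ p ≤ (a + δ) ^ p := by
          refine Real.rpow_le_rpow infDist_nonneg ?_ hp.le
          rw [← min_add_add_right]
          exact le_min (hnear y hy) (by linarith)
      _ ≤ a ^ p + η := hδη a ha
      _ ≤ infDist y S ^ p + η := by gcongr; exacts [ha.1, min_le_left _ _]
      _ ≤ _ := by linarith
  · calc infDist y T ^ p ≤ (3 * dist x₀ y) ^ p :=
          Real.rpow_le_rpow infDist_nonneg (by linarith) hp.le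
      _ = 3 ^ p * dist x₀ y ^ p := Real.mul_rpow (by norm_num) dist_nonneg
      _ ≤ 3 ^ p * (2 * rpowTail p x₀ M y) := by gcongr; exact hfar y hy
      _ ≤ _ := by linarith

end Quantization

section Continuity

variable [BorelSpace X] {p M r δ η : ℝ} {x₀ : X}

lemma Wp_le_Wp_add_rpowTail {ν : Measure X} [IsProbabilityMeasure ν]
    (hg : Integrable (fun y => dist x₀ y ^ p) ν) (hp : 0 < p) (hM : 0 ≤ M) (hr : 0 ≤ r)
    (hfar : ∀ y, r ≤ dist x₀ y → dist x₀ y ^ p ≤ 2 * rpowTail p x₀ M y) (hδ : 0 ≤ δ)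
    (hη : 0 ≤ η) (hδη : ∀ a ∈ Icc 0 (3 * r), (a + δ) ^ p ≤ a ^ p + η) {S T : Set X}
    (hS : S.Nonempty) (hT : T ⊆ closedBall x₀ (2 * r)) (hTne : T.Nonempty)
    (hnear : ∀ y, dist x₀ y < r → infDist y T ≤ infDist y S + δ) :
    Wp p T ν ≤ Wp p S ν + η + 2 * 3 ^ p * ∫ y, rpowTail p x₀ M y ∂ν := by
  have htail := integrable_rpowTail hg hp.le hM
  have hSi := integrable_infDist_rpow hg hp.le hS
  have hSηi : Integrable (fun y => infDist y S ^ p + η) ν := hSi.add (integrable_const η)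
  calc Wp p T ν ≤ ∫ y, (infDist y S ^ p + η + 2 * 3 ^ p * rpowTail p x₀ M y) ∂ν :=
        integral_mono (integrable_infDist_rpow hg hp.le hTne)
          (hSηi.add (htail.const_mul _))
          (infDist_rpow_le_add_rpowTail hp hr hfar hδ hη hδη hT hTne hnear)
    _ = _ := by
        rw [integral_add hSηi (htail.const_mul _),
          integral_add hSi (integrable_const η), integral_const, integral_const_mul,
          probReal_univ, one_smul, Wp]

variable {μ : Measure X} {μn : ℕ → Measure X} [IsProbabilityMeasure μ]
  [∀ n, IsProbabilityMeasure (μn n)] [ProperSpace X]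

lemma WassConvAt.eventually_lt_mCost (h : WassConvAt p μn μ x₀) (hp : 0 < p) {k : ℕ}
    (hk : 1 ≤ k) {c : ℝ} (hc : c < mCost p μ k univ) :
    ∀ᶠ n in atTop, c < mCost p (μn n) k univ := by
  set ε := mCost p μ k univ - c with hε
  obtain ⟨M, hM, htail⟩ :=
    h.exists_eventually_integral_rpowTail_lt hp.le (by positivity : 0 < ε / (8 * 3 ^ p))
  set r := (2 * M) ^ p⁻¹
  have hr : 0 ≤ r := by positivity
  obtain ⟨δ, hδ, hδη⟩ := exists_pos_rpow_add_le hp.le (3 * r) (by linarith : 0 < ε / 4)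
  obtain ⟨N, hNfin, hx₀N, hNball, hNnet⟩ := exists_finite_net x₀ (by positivity : 0 ≤ 2 * r) hδ
  have hcand : ∀ᶠ n in atTop, ∀ T ∈ {T | T ⊆ N}, Feas k univ T →
      mCost p μ k univ - ε / 4 < Wp p T (μn n) := by
    refine (eventually_all_finite hNfin.finite_subsets).2 fun T _ => ?_
    by_cases hT : Feas k univ T
    · have : mCost p μ k univ - ε / 4 < Wp p T μ := by linarith [mCost_le_Wp (p := p) (ν := μ) hT]
      filter_upwards [(h.tendsto_Wp hp.le hT.2.2.1).eventually (eventually_gt_nhds this)]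
        with n hn _ using hn
    · exact Eventually.of_forall fun n hT' => absurd hT' hT
  filter_upwards [htail, hcand] with n htailn hcandn
  refine (by linarith : c < mCost p μ k univ - 3 * ε / 4).trans_le
    (le_mCost hk ⟨x₀, mem_univ x₀⟩ fun S ⟨_, hSfin, hSne, hScard⟩ => ?_)
  obtain ⟨T, hTN, hTfin, hTne, hTcard, hnear⟩ :=
    exists_subset_infDist_le_add hδ.le hx₀N hNnet hSfin hSne
  have hTS := Wp_le_Wp_add_rpowTail (h.integrable_seq n) hp hM hr
    (fun y hy => dist_rpow_le_two_mul_rpowTail hp hM hy) hδ.le (by linarith) hδη hSne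
    (hTN.trans hNball) hTne hnear
  have hTlow := hcandn T hTN ⟨subset_univ T, hTfin, hTne, hTcard.trans hScard⟩
  have := (lt_div_iff₀ (by positivity : (0 : ℝ) < 8 * 3 ^ p)).1 htailn
  linarith

lemma WassConvAt.tendsto_mCost (h : WassConvAt p μn μ x₀) (hp : 0 < p) (k : ℕ) :
    Tendsto (fun n => mCost p (μn n) k univ) atTop (𝓝 (mCost p μ k univ)) := by
  rcases k.eq_zero_or_pos with rfl | hk
  · simpa only [mCost_zero] using tendsto_const_nhds
  · exact tendsto_order.2 ⟨fun c hc => h.eventually_lt_mCost hp hk hc,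
      fun c hc => h.eventually_mCost_lt hp.le hk hc⟩

end Continuity

section Vanishing

variable [BorelSpace X] [ProperSpace X] {p : ℝ} {x₀ : X}

/-- A finite `δ`-net of a large ball, with `δᵖ = ε / 2`, costs less than `ε`: the tail of the
`p`-th moment controls the points outside the ball. -/
lemma tendsto_mCost_atTop_zero {ν : Measure X} [IsProbabilityMeasure ν] (hp : 0 < p)
    (hg : Integrable (fun y => dist x₀ y ^ p) ν) :
    Tendsto (fun k => mCost p ν k univ) atTop (𝓝 0) := by
  refine tendsto_order.2 ⟨fun c hc => Eventually.of_forall fun k =>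
    hc.trans_le (mCost_nonneg p ν k univ), fun ε hε => ?_⟩
  obtain ⟨M, hM, htail⟩ := exists_integral_rpowTail_lt hg hp.le (by positivity : 0 < ε / 4)
  obtain ⟨N, hNfin, hx₀N, -, hNnet⟩ := exists_finite_net x₀ (by positivity : 0 ≤ (2 * M) ^ p⁻¹)
    (by positivity : 0 < (ε / 2) ^ p⁻¹)
  have hpoint : ∀ y, infDist y N ^ p ≤ ε / 2 + 2 * rpowTail p x₀ M y := fun y => by
    have htail0 := rpowTail_nonneg (p := p) (x₀ := x₀) (M := M) y
    rcases le_or_gt (dist x₀ y) ((2 * M) ^ p⁻¹) with hy | hy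
    · obtain ⟨w, hw, hyw⟩ := hNnet y (mem_closedBall'.2 hy)
      have : infDist y N ^ p ≤ ((ε / 2) ^ p⁻¹) ^ p :=
        Real.rpow_le_rpow infDist_nonneg ((infDist_le_dist_of_mem hw).trans hyw.le) hp.le
      rw [Real.rpow_inv_rpow (by positivity) hp.ne'] at this
      linarith
    · calc infDist y N ^ p ≤ dist x₀ y ^ p := Real.rpow_le_rpow infDist_nonneg
            ((infDist_le_dist_of_mem hx₀N).trans_eq (dist_comm y x₀)) hp.le
        _ ≤ 2 * rpowTail p x₀ M y := dist_rpow_le_two_mul_rpowTail hp hM hy.le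
        _ ≤ _ := by linarith
  have htaili := integrable_rpowTail hg hp.le hM
  have hWp : Wp p N ν < ε := calc
    Wp p N ν ≤ ∫ y, (ε / 2 + 2 * rpowTail p x₀ M y) ∂ν :=
      integral_mono (integrable_infDist_rpow hg hp.le ⟨x₀, hx₀N⟩)
        ((integrable_const _).add (htaili.const_mul 2)) hpoint
    _ = ε / 2 + 2 * ∫ y, rpowTail p x₀ M y ∂ν := by
      rw [integral_add (integrable_const _) (htaili.const_mul 2), integral_const,
        integral_const_mul, probReal_univ, one_smul]
    _ < ε := by linarith
  have hK : 1 ≤ N.ncard := (ncard_pos hNfin).2 ⟨x₀, hx₀N⟩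
  filter_upwards [eventually_ge_atTop N.ncard] with k hk
  exact ((mCost_antitoneOn p ν ⟨x₀, mem_univ x₀⟩ hK (hK.trans hk) hk).trans
    (mCost_le_Wp ⟨subset_univ N, hNfin, ⟨x₀, hx₀N⟩, le_rfl⟩)).trans_lt hWp

end Vanishing

theorem stmt19_general {X : Type*} [MetricSpace X] [ProperSpace X] [MeasurableSpace X] [BorelSpace X]
    (p : ℝ) (hp : 1 ≤ p) (μ : Measure X) [IsProbabilityMeasure μ] (hmom : FinMom p μ)
    (kst : ℕ) (hkst : 1 ≤ kst)
    (hmax : ∀ j : ℕ, 1 ≤ j → j ≠ kst → elbowDiff p μ j < elbowDiff p μ kst)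
    (μn : ℕ → Measure X) [∀ n, IsProbabilityMeasure (μn n)]
    (hmomn : ∀ n, FinMom p (μn n)) (hconv : WassTendsto p μn μ) :
    ∀ᶠ n in atTop, ∀ j : ℕ, 1 ≤ j → j ≠ kst →
      elbowDiff p (μn n) j < elbowDiff p (μn n) kst := by
  obtain ⟨x₀, hmoment⟩ := hconv.2
  have hp0 : 0 < p := zero_lt_one.trans_le hp
  have h : WassConvAt p μn μ x₀ := ⟨hconv.1, hmoment, hmom.integrable_dist_rpow hp0.le x₀,
    fun n => (hmomn n).integrable_dist_rpow hp0.le x₀⟩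
  exact eventually_secondDiff_lt_of_tendsto (h.tendsto_mCost hp0)
    (tendsto_mCost_atTop_zero hp0 h.integrable) (mCost_antitoneOn p μ ⟨x₀, mem_univ x₀⟩)
    (fun n => mCost_antitoneOn p (μn n) ⟨x₀, mem_univ x₀⟩) (fun n k => mCost_nonneg p _ k univ)
    hkst hmax

/-- **Continuity of the elbow-method choice of `k`.** If `μ` has infinite support and a
unique maximizer `k*` of `k ↦ Δ²m_{k,p}(μ)` over `k ≥ 1`, and `μ_n → μ` in the
`p`-Wasserstein topology, then for all sufficiently large `n` the measure `μ_n` also has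
`k*` as its unique maximizer; i.e. `k^elb_p(μ_n) = k^elb_p(μ) = k*` eventually. -/
theorem stmt19 {X : Type*} [MetricSpace X] [ProperSpace X] [MeasurableSpace X] [BorelSpace X]
    (p : ℝ) (hp : 1 ≤ p) (μ : Measure X) [IsProbabilityMeasure μ] (hmom : FinMom p μ)
    (hsupp : (measSupp μ).Infinite)
    (kst : ℕ) (hkst : 1 ≤ kst)
    (hmax : ∀ j : ℕ, 1 ≤ j → j ≠ kst → elbowDiff p μ j < elbowDiff p μ kst)
    (μn : ℕ → Measure X) [∀ n, IsProbabilityMeasure (μn n)]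
    (hmomn : ∀ n, FinMom p (μn n)) (hconv : WassTendsto p μn μ) :
    ∀ᶠ n in atTop, ∀ j : ℕ, 1 ≤ j → j ≠ kst →
      elbowDiff p (μn n) j < elbowDiff p (μn n) kst :=
  stmt19_general p hp μ hmom kst hkst hmax μn hmomn hconv
end
end
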